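/- Suppose Y = AX where every set of spark(A) − 1 columns of A is linearly independent (by definition of spark), X has k nonzero rows, and 2k < spark(A) + rank(X) − 1. If Z also satisfies Y = AZ with at most k nonzero rows, then the row support of Z equals the row support of X and Z = X. -/

import Mathlib

/-- Number of nonzero entries of a vector (the ℓ⁰ "norm"). -/
noncomputable def sparsity {n : ℕ} (x : Fin n → ℝ) : ℕ :=
  (Finset.univ.filter fun i => x i ≠ 0).card

/-- The spark of a matrix: the minimal number of nonzero entries of a
nonzero kernel vector (equivalently, the minimal number of linearly
dependent columns). -/
noncomputable def spark {m n : ℕ} (A : Matrix (Fin m) (Fin n) ℝ) : ℕ :=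
  sInf {k | ∃ v : Fin n → ℝ, v ≠ 0 ∧ A.mulVec v = 0 ∧ sparsity v = k}

open Classical in
/-- Number of nonzero rows of a matrix (the joint-sparsity "norm" ‖X‖₀). -/
noncomputable def rowSparsity {n M : ℕ} (X : Matrix (Fin n) (Fin M) ℝ) : ℕ :=
  (Finset.univ.filter fun j => X j ≠ 0).card

/-!
Put `W = X - Z`. Its columns lie in `ker A` and are supported on `S = supp X ∪ supp Z`; a space
of dimension `d ≥ 1` of such vectors contains a nonzero vector vanishing on any `d - 1` chosen
coordinates of `S`, so `spark A + rank W ≤ |S| + 1`. Outside `supp X ∩ supp Z` every row of `X` is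
zero or a row of `W`, so `rank X ≤ rank W + |supp X ∩ supp Z|`. Adding up, with
`|S| + |supp X ∩ supp Z| = |supp X| + |supp Z| ≤ 2k`, gives `spark A + rank X ≤ 2k + 1` unless `W = 0`.
-/

open Module
open scoped Matrix

lemma sparsity_le_card {n : ℕ} {v : Fin n → ℝ} {s : Finset (Fin n)} (hv : ∀ i ∉ s, v i = 0) :
    sparsity v ≤ s.card :=
  Finset.card_le_card fun i hi => by
    by_contra hs
    exact (Finset.mem_filter.1 hi).2 (hv i hs)

lemma spark_le_sparsity {m n : ℕ} {A : Matrix (Fin m) (Fin n) ℝ} {v : Fin n → ℝ} (hv : v ≠ 0)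
    (hAv : A *ᵥ v = 0) : spark A ≤ sparsity v :=
  Nat.sInf_le ⟨v, hv, hAv, rfl⟩

lemma Submodule.exists_ne_zero_eq_zero_on_of_card_lt_finrank {K ι : Type*} [Field K] [Fintype ι]
    (V : Submodule K (ι → K)) (T : Finset ι) (hT : T.card < finrank K V) :
    ∃ v ∈ V, v ≠ 0 ∧ ∀ i ∈ T, v i = 0 := by
  let restrict : V →ₗ[K] (T → K) := LinearMap.funLeft K K (Subtype.val : T → ι) ∘ₗ V.subtype
  have hker : LinearMap.ker restrict ≠ ⊥ :=
    LinearMap.ker_ne_bot_of_finrank_lt (by rwa [finrank_fintype_fun_eq_card, Fintype.card_coe])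
  obtain ⟨v, hv, hv0⟩ := (Submodule.ne_bot_iff _).1 hker
  exact ⟨v, v.2, fun h => hv0 (Subtype.ext h), fun i hi => congrFun hv ⟨i, hi⟩⟩

lemma spark_add_finrank_le {m n : ℕ} {A : Matrix (Fin m) (Fin n) ℝ}
    {V : Submodule ℝ (Fin n → ℝ)} {S : Finset (Fin n)} (hVA : V ≤ LinearMap.ker A.mulVecLin)
    (hVS : ∀ v ∈ V, ∀ i ∉ S, v i = 0) (hV : V ≠ ⊥) :
    spark A + finrank ℝ V ≤ S.card + 1 := by
  have hd : 1 ≤ finrank ℝ V := Submodule.one_le_finrank_iff.2 hV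
  have hdS : finrank ℝ V ≤ S.card := by
    by_contra! hlt
    obtain ⟨v, hvV, hv0, hvS⟩ := V.exists_ne_zero_eq_zero_on_of_card_lt_finrank S hlt
    exact hv0 (funext fun i => if hi : i ∈ S then hvS i hi else hVS v hvV i hi)
  obtain ⟨T, hTS, hTcard⟩ := Finset.exists_subset_card_eq (show finrank ℝ V - 1 ≤ S.card by omega)
  obtain ⟨v, hvV, hv0, hvT⟩ := V.exists_ne_zero_eq_zero_on_of_card_lt_finrank T (by omega)
  have hsupp : ∀ i ∉ S \ T, v i = 0 := fun i hi => by
    rw [Finset.mem_sdiff, not_and_not_right] at hi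
    by_cases hiS : i ∈ S
    · exact hvT i (hi hiS)
    · exact hVS v hvV i hiS
  have hspark := (spark_le_sparsity hv0 (hVA hvV)).trans (sparsity_le_card hsupp)
  rw [Finset.card_sdiff_of_subset hTS] at hspark
  omega

lemma spark_add_rank_le {m n M : ℕ} {A : Matrix (Fin m) (Fin n) ℝ} {W : Matrix (Fin n) (Fin M) ℝ}
    {S : Finset (Fin n)} (hAW : A * W = 0) (hW : W ≠ 0) (hWS : ∀ i ∉ S, W i = 0) :
    spark A + W.rank ≤ S.card + 1 := by
  refine spark_add_finrank_le (LinearMap.range_le_ker_iff.2 ?_) ?_ ?_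
  · rw [← Matrix.mulVecLin_mul, hAW, Matrix.mulVecLin_zero]
  · rintro _ ⟨c, rfl⟩ i hi
    simp [Matrix.mulVec, hWS i hi]
  · rw [Ne, LinearMap.range_eq_bot]
    intro h
    exact hW (Matrix.toLin'.injective (by rw [Matrix.toLin'_apply', h, map_zero]))

lemma Matrix.rank_le_rank_add_card {K ι κ : Type*} [Field K] [Fintype ι] [Fintype κ]
    {X W : Matrix ι κ K} (s : Finset ι) (h : ∀ i ∉ s, X i ∈ Submodule.span K (Set.range W.row)) :
    X.rank ≤ W.rank + s.card := by
  classical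
  rw [rank_eq_finrank_span_row, rank_eq_finrank_span_row]
  set P := Submodule.span K (Set.range W.row)
  set Q := Submodule.span K (s.image X.row : Set (κ → K))
  have hspan : Submodule.span K (Set.range X.row) ≤ P ⊔ Q := by
    rw [Submodule.span_le]
    rintro _ ⟨i, rfl⟩
    by_cases hi : i ∈ s
    · exact Submodule.mem_sup_right (Submodule.subset_span (Finset.mem_image_of_mem _ hi))
    · exact Submodule.mem_sup_left (h i hi)
  calc finrank K (Submodule.span K (Set.range X.row))
      ≤ finrank K ↥(P ⊔ Q) := Submodule.finrank_mono hspan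
    _ ≤ finrank K P + finrank K Q := Submodule.finrank_add_le_finrank_add_finrank P Q
    _ ≤ finrank K P + s.card :=
        Nat.add_le_add_left ((finrank_span_finset_le_card _).trans Finset.card_image_le) _

theorem stmt_17_general {m n M : ℕ} (A : Matrix (Fin m) (Fin n) ℝ)
    (X Z : Matrix (Fin n) (Fin M) ℝ) (Y : Matrix (Fin m) (Fin M) ℝ) (k : ℕ)
    (hY : A * X = Y)
    (hk : rowSparsity X = k)
    (hbound : (2 * k : ℝ) < (spark A : ℝ) + (X.rank : ℝ) - 1)
    (hZ : A * Z = Y) (hZk : rowSparsity Z ≤ k) :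
    {j : Fin n | Z j ≠ 0} = {j : Fin n | X j ≠ 0} ∧ Z = X := by
  classical
  simp only [rowSparsity] at hk hZk
  suffices hZX : Z = X by subst hZX; exact ⟨rfl, rfl⟩
  by_contra hZX
  set Sx := Finset.univ.filter fun j => X j ≠ 0
  set Sz := Finset.univ.filter fun j => Z j ≠ 0
  have hspark : spark A + (X - Z).rank ≤ (Sx ∪ Sz).card + 1 := by
    refine spark_add_rank_le (by rw [Matrix.mul_sub, hY, hZ, sub_self])
      (sub_ne_zero.2 (Ne.symm hZX)) fun i hi => ?_
    simp only [Finset.mem_union, Finset.mem_filter, Finset.mem_univ, true_and, not_or,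
      not_not, Sx, Sz] at hi
    show X i - Z i = 0
    rw [hi.1, hi.2, sub_zero]
  have hrank : X.rank ≤ (X - Z).rank + (Sx ∩ Sz).card := by
    refine Matrix.rank_le_rank_add_card _ fun i hi => ?_
    by_cases hXi : X i = 0
    · simp [hXi]
    · have hZi : Z i = 0 := by simp_all [Sx, Sz]
      exact Submodule.subset_span ⟨i, show X i - Z i = X i by rw [hZi, sub_zero]⟩
  have hcard := Finset.card_union_add_card_inter Sx Sz
  have hle : spark A + X.rank ≤ 2 * k + 1 := by omega
  have hle' : (spark A : ℝ) + X.rank ≤ 2 * k + 1 := by exact_mod_cast hle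
  linarith

theorem stmt_17 {m n M : ℕ} (A : Matrix (Fin m) (Fin n) ℝ)
    (X Z : Matrix (Fin n) (Fin M) ℝ) (Y : Matrix (Fin m) (Fin M) ℝ) (k : ℕ)
    (hY : A * X = Y)
    -- every set of spark(A) − 1 columns of A is linearly independent
    (hind : ∀ t : Finset (Fin n), t.card = spark A - 1 →
      LinearIndependent ℝ (fun i : {j : Fin n // j ∈ t} =>
        A.transpose (i : Fin n)))
    (hk : rowSparsity X = k)
    (hrank : X.rank = Y.rank)
    (hbound : (2 * k : ℝ) < (spark A : ℝ) + (X.rank : ℝ) - 1)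
    (hZ : A * Z = Y) (hZk : rowSparsity Z ≤ k) :
    {j : Fin n | Z j ≠ 0} = {j : Fin n | X j ≠ 0} ∧ Z = X :=
  stmt_17_general A X Z Y k hY hk hbound hZ hZk
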